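/- If (X,T) is mean equicontinuous and every proximal pair is a pair of equal points (i.e., (X,T) is distal), then (X,T) is equicontinuous. -/

import Mathlib

/-!
The pseudometric `meanDist T x y = limsup_n (1/n) ∑_{i<n} d(Tⁱx, Tⁱy)` does not increase along
orbits, and mean equicontinuity makes it uniformly continuous on `X × X`. It dominates
`inf_n d(Tⁿx, Tⁿy)`, so distality makes it positive off the diagonal, and compactness gives
`η > 0` with `meanDist ≥ η` on `{d(x, y) ≥ ε}`. If `δ` is chosen by mean equicontinuity for `η`,
then `d(x, y) < δ` gives `meanDist(Tⁿx, Tⁿy) ≤ meanDist(x, y) < η`, hence `d(Tⁿx, Tⁿy) < ε`.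
-/

open Filter Topology MeasureTheory
open scoped Classical

noncomputable def avgDist {Z : Type*} [MetricSpace Z] (R : Z → Z) (x y : Z) (n : ℕ) : ℝ :=
  (n : ℝ)⁻¹ * ∑ i ∈ Finset.range n, dist (R^[i] x) (R^[i] y)

def MeanEquicontinuous {Z : Type*} [MetricSpace Z] (R : Z → Z) : Prop :=
  ∀ ε > 0, ∃ δ > 0, ∀ x y : Z, dist x y < δ →
    Filter.limsup (avgDist R x y) Filter.atTop < ε

def MeanEqPtAt {Z : Type*} [MetricSpace Z] (R : Z → Z) (x : Z) : Prop :=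
  ∀ ε > 0, ∃ δ > 0, ∀ y : Z, dist x y < δ →
    Filter.limsup (avgDist R x y) Filter.atTop < ε

def MeanSensitive {Z : Type*} [MetricSpace Z] (R : Z → Z) : Prop :=
  ∃ δ > 0, ∀ x : Z, ∀ ε > 0, ∃ y : Z, dist x y < ε ∧
    δ < Filter.limsup (avgDist R x y) Filter.atTop

open scoped BigOperators

section MeanDist

variable {X : Type*} [MetricSpace X] (T : X → X)

noncomputable def meanDist (x y : X) : ℝ :=
  limsup (avgDist T x y) atTop

lemma avgDist_eq_expect (x y : X) (n : ℕ) :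
    avgDist T x y n = 𝔼 i ∈ Finset.range n, dist (T^[i] x) (T^[i] y) := by
  rw [Finset.expect_eq_sum_div_card, Finset.card_range, div_eq_inv_mul, avgDist]

lemma avgDist_nonneg (x y : X) (n : ℕ) : 0 ≤ avgDist T x y n := by
  rw [avgDist_eq_expect]
  exact Finset.expect_nonneg fun _ _ => dist_nonneg

lemma avgDist_comm (x y : X) : avgDist T x y = avgDist T y x := by
  funext n
  simp only [avgDist, dist_comm]

lemma avgDist_triangle (x y z : X) (n : ℕ) :
    avgDist T x z n ≤ avgDist T x y n + avgDist T y z n := by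
  simp only [avgDist_eq_expect, ← Finset.expect_add_distrib]
  exact Finset.expect_le_expect fun i _ => dist_triangle _ (T^[i] y) _

lemma avgDist_le_diam [BoundedSpace X] (x y : X) (n : ℕ) :
    avgDist T x y n ≤ Metric.diam (Set.univ : Set X) := by
  rcases Nat.eq_zero_or_pos n with rfl | hn
  · simpa [avgDist] using Metric.diam_nonneg
  · rw [avgDist_eq_expect]
    exact Finset.expect_le (Finset.nonempty_range_iff.2 hn.ne') fun _ _ =>
      Metric.dist_le_diam_of_mem BoundedSpace.bounded_univ trivial trivial

lemma iInf_dist_iterate_le_avgDist (x y : X) {n : ℕ} (hn : 0 < n) :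
    ⨅ i : ℕ, dist (T^[i] x) (T^[i] y) ≤ avgDist T x y n := by
  rw [avgDist_eq_expect]
  exact Finset.le_expect (Finset.nonempty_range_iff.2 hn.ne') fun i _ =>
    ciInf_le ⟨0, Set.forall_mem_range.2 fun _ => dist_nonneg⟩ i

lemma avgDist_apply_le [BoundedSpace X] (x y : X) (n : ℕ) :
    avgDist T (T x) (T y) n ≤ avgDist T x y n + Metric.diam (Set.univ : Set X) / n := by
  set d : ℕ → ℝ := fun i => dist (T^[i] x) (T^[i] y)
  have hshift : ∑ i ∈ Finset.range n, dist (T^[i] (T x)) (T^[i] (T y))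
      = ∑ i ∈ Finset.range n, d i + (d n - d 0) := by
    simp only [← Function.iterate_succ_apply]
    rw [← Finset.sum_range_sub d, ← Finset.sum_add_distrib]
    exact Finset.sum_congr rfl fun _ _ => by ring
  have hd : d n - d 0 ≤ Metric.diam (Set.univ : Set X) :=
    (sub_le_self _ dist_nonneg).trans
      (Metric.dist_le_diam_of_mem BoundedSpace.bounded_univ trivial trivial)
  rw [avgDist, avgDist, hshift, mul_add, div_eq_inv_mul]
  gcongr

variable {T}

lemma isBoundedUnder_ge_avgDist (x y : X) : IsBoundedUnder (· ≥ ·) atTop (avgDist T x y) :=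
  isBoundedUnder_of ⟨0, avgDist_nonneg T x y⟩

lemma isBoundedUnder_le_avgDist [BoundedSpace X] (x y : X) :
    IsBoundedUnder (· ≤ ·) atTop (avgDist T x y) :=
  isBoundedUnder_of ⟨_, avgDist_le_diam T x y⟩

lemma meanDist_comm (x y : X) : meanDist T x y = meanDist T y x := by
  rw [meanDist, meanDist, avgDist_comm]

lemma meanDist_triangle [BoundedSpace X] (x y z : X) :
    meanDist T x z ≤ meanDist T x y + meanDist T y z :=
  (limsup_le_limsup (Eventually.of_forall (avgDist_triangle T x y z))
      (isBoundedUnder_ge_avgDist x z).isCoboundedUnder_le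
      (isBoundedUnder_le_add (isBoundedUnder_le_avgDist x y) (isBoundedUnder_le_avgDist y z))).trans
    (limsup_add_le (isBoundedUnder_ge_avgDist x y) (isBoundedUnder_le_avgDist x y)
      (isBoundedUnder_ge_avgDist y z).isCoboundedUnder_le (isBoundedUnder_le_avgDist y z))

lemma abs_meanDist_sub_meanDist_le [BoundedSpace X] (x y x' y' : X) :
    |meanDist T x y - meanDist T x' y'| ≤ meanDist T x x' + meanDist T y y' := by
  have h₁ := meanDist_triangle (T := T) x x' y
  have h₂ := meanDist_triangle (T := T) x' y' y
  have h₃ := meanDist_triangle (T := T) x' x y'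
  have h₄ := meanDist_triangle (T := T) x y y'
  rw [meanDist_comm y' y] at h₂
  rw [meanDist_comm x' x] at h₃
  rw [abs_sub_le_iff]
  constructor <;> linarith

lemma iInf_dist_iterate_le_meanDist [BoundedSpace X] (x y : X) :
    ⨅ i : ℕ, dist (T^[i] x) (T^[i] y) ≤ meanDist T x y :=
  le_limsup_of_frequently_le
    (eventually_atTop.2 ⟨1, fun _ hn => iInf_dist_iterate_le_avgDist T x y hn⟩).frequently
    (isBoundedUnder_le_avgDist x y)

lemma meanDist_apply_le [BoundedSpace X] (x y : X) :
    meanDist T (T x) (T y) ≤ meanDist T x y := by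
  have hdecay : Tendsto (fun n : ℕ => Metric.diam (Set.univ : Set X) / n) atTop (𝓝 0) :=
    tendsto_const_div_atTop_nhds_zero_nat _
  calc meanDist T (T x) (T y)
      ≤ limsup (avgDist T x y + fun n : ℕ => Metric.diam (Set.univ : Set X) / n) atTop :=
        limsup_le_limsup (Eventually.of_forall (avgDist_apply_le T x y))
          (isBoundedUnder_ge_avgDist _ _).isCoboundedUnder_le
          (isBoundedUnder_le_add (isBoundedUnder_le_avgDist x y) hdecay.isBoundedUnder_le)
    _ ≤ meanDist T x y + 0 := by
        rw [← hdecay.limsup_eq]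
        exact limsup_add_le (isBoundedUnder_ge_avgDist x y) (isBoundedUnder_le_avgDist x y)
          hdecay.isBoundedUnder_ge.isCoboundedUnder_le hdecay.isBoundedUnder_le
    _ = meanDist T x y := add_zero _

lemma meanDist_iterate_le [BoundedSpace X] (x y : X) (n : ℕ) :
    meanDist T (T^[n] x) (T^[n] y) ≤ meanDist T x y := by
  induction n with
  | zero => rfl
  | succ n ih =>
    rw [Function.iterate_succ_apply', Function.iterate_succ_apply']
    exact (meanDist_apply_le _ _).trans ih

end MeanDist

lemma MeanEquicontinuous.uniformContinuous_meanDist {X : Type*} [MetricSpace X] [BoundedSpace X]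
    {T : X → X} (h : MeanEquicontinuous T) :
    UniformContinuous fun p : X × X => meanDist T p.1 p.2 := by
  refine Metric.uniformContinuous_iff.2 fun ε hε => ?_
  obtain ⟨δ, hδ, hmean⟩ := h (ε / 2) (half_pos hε)
  refine ⟨δ, hδ, fun {p q} hpq => ?_⟩
  rw [Prod.dist_eq, max_lt_iff] at hpq
  calc dist (meanDist T p.1 p.2) (meanDist T q.1 q.2)
      ≤ meanDist T p.1 q.1 + meanDist T p.2 q.2 := abs_meanDist_sub_meanDist_le _ _ _ _
    _ < ε / 2 + ε / 2 := add_lt_add (hmean _ _ hpq.1) (hmean _ _ hpq.2)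
    _ = ε := add_halves ε

lemma exists_pos_le_meanDist_of_le_dist {X : Type*} [MetricSpace X] [CompactSpace X]
    {T : X → X} (h : MeanEquicontinuous T)
    (hd : ∀ x y : X, x ≠ y → 0 < ⨅ n : ℕ, dist (T^[n] x) (T^[n] y)) {ε : ℝ} (hε : 0 < ε) :
    ∃ η > 0, ∀ x y : X, ε ≤ dist x y → η ≤ meanDist T x y := by
  have hK : IsCompact {p : X × X | ε ≤ dist p.1 p.2} :=
    (isClosed_le continuous_const continuous_dist).isCompact
  obtain ⟨η, hη, hle⟩ := hK.exists_forall_le' h.uniformContinuous_meanDist.continuous.continuousOn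
    fun p hp => (hd p.1 p.2 (dist_pos.1 (hε.trans_le hp))).trans_le
      (iInf_dist_iterate_le_meanDist p.1 p.2)
  exact ⟨η, hη, fun x y hxy => hle (x, y) hxy⟩

theorem equicontinuous_of_meanEquicontinuous_distal_general
    {X : Type*} [MetricSpace X] [CompactSpace X] (T : X → X)
    (h : MeanEquicontinuous T)
    (hd : ∀ x y : X, x ≠ y → 0 < ⨅ n : ℕ, dist (T^[n] x) (T^[n] y)) :
    ∀ ε > 0, ∃ δ > 0, ∀ x y : X, dist x y < δ → ∀ n : ℕ,
      dist (T^[n] x) (T^[n] y) < ε := by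
  intro ε hε
  obtain ⟨η, hη, hsep⟩ := exists_pos_le_meanDist_of_le_dist h hd hε
  obtain ⟨δ, hδ, hmean⟩ := h η hη
  refine ⟨δ, hδ, fun x y hxy n => ?_⟩
  by_contra! hfar
  exact ((hsep _ _ hfar).trans (meanDist_iterate_le x y n)).not_gt (hmean x y hxy)

theorem equicontinuous_of_meanEquicontinuous_distal
    {X : Type*} [MetricSpace X] [CompactSpace X] (T : X → X) (hT : Continuous T)
    (h : MeanEquicontinuous T)
    (hd : ∀ x y : X, x ≠ y → 0 < ⨅ n : ℕ, dist (T^[n] x) (T^[n] y)) :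
    ∀ ε > 0, ∃ δ > 0, ∀ x y : X, dist x y < δ → ∀ n : ℕ,
      dist (T^[n] x) (T^[n] y) < ε :=
  equicontinuous_of_meanEquicontinuous_distal_general T h hd
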